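/- arXiv:2108.06787 — 3 statements merged into one kernel-verified Lean document; each statement's English description precedes it below -/
import Mathlib

section
/- Let F : U → ℂ with U ⊆ ℂ open, let z ∈ ℂ with z ≠ 0 and 1/z̄ ∈ U, and suppose F is real-differentiable at 1/z̄ with F(1/z̄) ≠ 0. Define G(ζ) = 1/conj(F(1/ζ̄)) for ζ near z. Then G is real-differentiable at z and its Wirtinger derivatives satisfy G_z(z) = conj(F_z(1/z̄)) / (z² · conj(F(1/z̄))²) and (Ḡ)_z(z) = conj((F̄)_z(1/z̄)) / (z² · F(1/z̄)²), where F̄ and Ḡ denote the pointwise complex conjugates of F and G. -/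
/-!
Every ℝ-linear map `ℂ → ℂ` is `v ↦ a v + b v̄`, and its Wirtinger derivatives are read off as
`a = (L 1 - i L i)/2`, `b = (L 1 + i L i)/2`. Composition, conjugation and inversion act on the
pair `(a, b)` by explicit formulas, so the derivative of
`G = inv ∘ conj ∘ F ∘ inv ∘ conj` at `z` is computed coefficient by coefficient from
`(F_z, F_z̄)` at `1/z̄`.
-/

noncomputable def wirtingerZ (f : ℂ → ℂ) (z : ℂ) : ℂ :=
  ((fderiv ℝ f z) 1 - Complex.I * (fderiv ℝ f z) Complex.I) / 2

open Complex ComplexConjugate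

noncomputable def wirtingerZbar (f : ℂ → ℂ) (z : ℂ) : ℂ :=
  ((fderiv ℝ f z) 1 + I * (fderiv ℝ f z) I) / 2

namespace Complex

noncomputable def wirtingerCLM (a b : ℂ) : ℂ →L[ℝ] ℂ :=
  a • ContinuousLinearMap.id ℝ ℂ + b • (conjCLE : ℂ →L[ℝ] ℂ)

@[simp]
theorem wirtingerCLM_apply (a b v : ℂ) : wirtingerCLM a b v = a * v + b * conj v := by
  simp [wirtingerCLM]

theorem wirtingerCLM_comp (a b c d : ℂ) :
    (wirtingerCLM a b).comp (wirtingerCLM c d) =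
      wirtingerCLM (a * c + b * conj d) (a * d + b * conj c) := by
  ext1 v
  simp only [ContinuousLinearMap.comp_apply, wirtingerCLM_apply, map_add, map_mul, conj_conj]
  ring

theorem wirtingerCLM_apply_one_sub_I_mul (a b : ℂ) :
    (wirtingerCLM a b 1 - I * wirtingerCLM a b I) / 2 = a := by
  simp only [wirtingerCLM_apply, map_one, conj_I]
  linear_combination (b - a) / 2 * I_sq

theorem eq_wirtingerCLM (L : ℂ →L[ℝ] ℂ) :
    L = wirtingerCLM ((L 1 - I * L I) / 2) ((L 1 + I * L I) / 2) := by
  ext1 v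
  obtain ⟨x, y, rfl⟩ : ∃ x y : ℝ, v = x + y * I := ⟨v.re, v.im, (re_add_im v).symm⟩
  have hxy : (x : ℂ) + y * I = x • (1 : ℂ) + y • I := by simp [real_smul]
  rw [hxy, map_add, map_smul, map_smul, ← hxy]
  simp only [wirtingerCLM_apply, real_smul, map_add, map_mul, conj_ofReal, conj_I]
  linear_combination y * L I * I_sq

end Complex

theorem hasFDerivAt_conj_wirtingerCLM (x : ℂ) :
    HasFDerivAt (conj : ℂ → ℂ) (wirtingerCLM 0 1) x := by
  have hconj : wirtingerCLM 0 1 = (conjCLE : ℂ →L[ℝ] ℂ) := by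
    ext1 v
    simp
  exact hconj ▸ conjCLE.hasFDerivAt

theorem restrictScalars_smulRight_one_eq_wirtingerCLM (c : ℂ) :
    ((1 : ℂ →L[ℂ] ℂ).smulRight c).restrictScalars ℝ = wirtingerCLM c 0 := by
  ext1 v; simp [mul_comm]

theorem DifferentiableAt.hasFDerivAt_wirtingerCLM {f : ℂ → ℂ} {x : ℂ}
    (hf : DifferentiableAt ℝ f x) :
    HasFDerivAt f (wirtingerCLM (wirtingerZ f x) (wirtingerZbar f x)) x :=
  eq_wirtingerCLM (fderiv ℝ f x) ▸ hf.hasFDerivAt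

namespace HasFDerivAt

variable {f : ℂ → ℂ} {x a b : ℂ}

theorem wirtingerZ_eq (hf : HasFDerivAt f (wirtingerCLM a b) x) : wirtingerZ f x = a := by
  rw [wirtingerZ, hf.fderiv, wirtingerCLM_apply_one_sub_I_mul]

theorem comp_wirtingerCLM {g : ℂ → ℂ} {c d : ℂ} (hg : HasFDerivAt g (wirtingerCLM a b) (f x))
    (hf : HasFDerivAt f (wirtingerCLM c d) x) :
    HasFDerivAt (g ∘ f) (wirtingerCLM (a * c + b * conj d) (a * d + b * conj c)) x :=
  wirtingerCLM_comp a b c d ▸ hg.comp x hf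

theorem conj_wirtingerCLM (hf : HasFDerivAt f (wirtingerCLM a b) x) :
    HasFDerivAt (fun y => conj (f y)) (wirtingerCLM (conj b) (conj a)) x := by
  have h := (hasFDerivAt_conj_wirtingerCLM (f x)).comp_wirtingerCLM hf
  simp only [zero_mul, one_mul, zero_add] at h
  exact h

theorem inv_wirtingerCLM (hf : HasFDerivAt f (wirtingerCLM a b) x) (hx : f x ≠ 0) :
    HasFDerivAt (fun y => (f y)⁻¹) (wirtingerCLM (-a / f x ^ 2) (-b / f x ^ 2)) x := by
  have hinv : HasFDerivAt (fun y : ℂ => y⁻¹) (wirtingerCLM (-(f x ^ 2)⁻¹) 0) (f x) := by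
    rw [← restrictScalars_smulRight_one_eq_wirtingerCLM]
    exact (hasDerivAt_inv hx).hasFDerivAt.restrictScalars ℝ
  have h := hinv.comp_wirtingerCLM hf
  simp only [zero_mul, add_zero, neg_mul, inv_mul_eq_div] at h
  rw [neg_div, neg_div]
  exact h

end HasFDerivAt

theorem stmt_5_general (F : ℂ → ℂ) (z : ℂ) (hz : z ≠ 0)
    (hF : DifferentiableAt ℝ F ((starRingEnd ℂ) z)⁻¹)
    (hFne : F ((starRingEnd ℂ) z)⁻¹ ≠ 0)
    (G : ℂ → ℂ) (hG : G = fun ζ => ((starRingEnd ℂ) (F ((starRingEnd ℂ) ζ)⁻¹))⁻¹) :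
    DifferentiableAt ℝ G z ∧
    wirtingerZ G z =
      (starRingEnd ℂ) (wirtingerZ F ((starRingEnd ℂ) z)⁻¹) /
        (z ^ 2 * ((starRingEnd ℂ) (F ((starRingEnd ℂ) z)⁻¹)) ^ 2) ∧
    wirtingerZ (fun ζ => (starRingEnd ℂ) (G ζ)) z =
      (starRingEnd ℂ) (wirtingerZ (fun ζ => (starRingEnd ℂ) (F ζ)) ((starRingEnd ℂ) z)⁻¹) /
        (z ^ 2 * (F ((starRingEnd ℂ) z)⁻¹) ^ 2) := by
  subst hG
  have hreflect : HasFDerivAt (fun ζ => (conj ζ)⁻¹) (wirtingerCLM 0 (-1 / conj z ^ 2)) z := by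
    simpa using (hasFDerivAt_conj_wirtingerCLM z).inv_wirtingerCLM (by simpa using hz)
  have hFw := hF.hasFDerivAt_wirtingerCLM
  have hG := ((hFw.comp_wirtingerCLM (x := z) hreflect).conj_wirtingerCLM).inv_wirtingerCLM
    (by simpa using hFne)
  refine ⟨hG.differentiableAt, hG.wirtingerZ_eq.trans ?_,
    hG.conj_wirtingerCLM.wirtingerZ_eq.trans ?_⟩
  · simp only [map_zero, mul_zero, add_zero, map_mul, map_div₀, map_neg, map_one, map_pow,
      RingHomCompTriple.comp_apply, RingHom.id_apply, Function.comp_apply]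
    ring
  · rw [hFw.conj_wirtingerCLM.wirtingerZ_eq]
    simp only [mul_zero, zero_add, map_mul, map_div₀, map_neg, map_one, map_pow,
      RingHomCompTriple.comp_apply, RingHom.id_apply, Function.comp_apply]
    ring

/-- Wirtinger derivatives of the inversion reflection
`G(ζ) = 1/conj(F(1/ζ̄))`: if `F` is real-differentiable at `1/z̄` with
`F(1/z̄) ≠ 0` and `z ≠ 0`, then `G` is real-differentiable at `z`,
`G_z(z) = conj(F_z(1/z̄)) / (z²·conj(F(1/z̄))²)` and
`(Ḡ)_z(z) = conj((F̄)_z(1/z̄)) / (z²·F(1/z̄)²)`. -/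
theorem stmt_5 (U : Set ℂ) (hU : IsOpen U) (F : ℂ → ℂ) (z : ℂ) (hz : z ≠ 0)
    (hmem : ((starRingEnd ℂ) z)⁻¹ ∈ U)
    (hF : DifferentiableAt ℝ F ((starRingEnd ℂ) z)⁻¹)
    (hFne : F ((starRingEnd ℂ) z)⁻¹ ≠ 0)
    (G : ℂ → ℂ) (hG : G = fun ζ => ((starRingEnd ℂ) (F ((starRingEnd ℂ) ζ)⁻¹))⁻¹) :
    DifferentiableAt ℝ G z ∧
    wirtingerZ G z =
      (starRingEnd ℂ) (wirtingerZ F ((starRingEnd ℂ) z)⁻¹) /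
        (z ^ 2 * ((starRingEnd ℂ) (F ((starRingEnd ℂ) z)⁻¹)) ^ 2) ∧
    wirtingerZ (fun ζ => (starRingEnd ℂ) (G ζ)) z =
      (starRingEnd ℂ) (wirtingerZ (fun ζ => (starRingEnd ℂ) (F ζ)) ((starRingEnd ℂ) z)⁻¹) /
        (z ^ 2 * (F ((starRingEnd ℂ) z)⁻¹) ^ 2) :=
  stmt_5_general F z hz hF hFne G hG
end

section
/- Let 0 < r < 1 < R, let A(1,R) = {w ∈ ℂ : 1 < |w| < R}, and let F : A(1,R) → ℂ and ρ₁ be a positive function on the range of F. Let c ∈ ℝ, and suppose that for every w ∈ A(1,R), F is real-differentiable at w, F(w) ≠ 0, and ρ₁(F(w))²·F_w(w)·(F̄)_w(w) = c/w². For 1/R < |z| < 1 define F̃(z) = 1/conj(F(1/z̄)) and define ρ̃ on the range of F̃ by ρ̃(u) = ρ₁(1/ū). Then for every z with 1/R < |z| < 1, ρ̃(F̃(z))²·F̃_z(z)·(conj F̃)_z(z) = (1/|F(1/z̄)|⁴)·(c/z²). -/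
open Complex ComplexConjugate Filter Topology

namespace Wirtinger

noncomputable def dz (L : ℂ →L[ℝ] ℂ) : ℂ := (L 1 - I * L I) / 2

noncomputable def dzbar (L : ℂ →L[ℝ] ℂ) : ℂ := (L 1 + I * L I) / 2

theorem apply_eq_dz_mul_add_dzbar_mul (L : ℂ →L[ℝ] ℂ) (u : ℂ) :
    L u = dz L * u + dzbar L * conj u := by
  have hu : u = u.re • (1 : ℂ) + u.im • I := by simp [real_smul, re_add_im]
  conv_lhs => rw [hu, map_add, map_smul, map_smul]
  conv_rhs => rw [← re_add_im u]
  simp only [dz, dzbar, real_smul, map_add, map_mul, conj_ofReal, conj_I]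
  linear_combination (u.im * L I) * I_sq

theorem dz_eq_of_apply {L : ℂ →L[ℝ] ℂ} {p q : ℂ} (h : ∀ u, L u = p * u + q * conj u) :
    dz L = p := by
  simp only [dz, h, map_one, conj_I]
  linear_combination (-(p - q) / 2) * I_sq

theorem dzbar_eq_of_apply {L : ℂ →L[ℝ] ℂ} {p q : ℂ} (h : ∀ u, L u = p * u + q * conj u) :
    dzbar L = q := by
  simp only [dzbar, h, map_one, conj_I]
  linear_combination ((p - q) / 2) * I_sq

end Wirtinger

open Wirtinger

theorem wirtingerZ_eq_dz (f : ℂ → ℂ) (z : ℂ) : wirtingerZ f z = dz (fderiv ℝ f z) :=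
  rfl

theorem wirtingerZ_congr {f g : ℂ → ℂ} {z : ℂ} (h : f =ᶠ[𝓝 z] g) :
    wirtingerZ f z = wirtingerZ g z := by
  simp only [wirtingerZ_eq_dz, h.fderiv_eq]

theorem fderiv_conj_apply (f : ℂ → ℂ) (z u : ℂ) :
    fderiv ℝ (fun ζ => conj (f ζ)) z u = conj (fderiv ℝ f z u) := by
  rw [show (fun ζ => conj (f ζ)) = fun ζ => star (f ζ) from rfl, fderiv_star]
  rfl

theorem wirtingerZ_conj (f : ℂ → ℂ) (z : ℂ) :
    wirtingerZ (fun ζ => conj (f ζ)) z = conj (dzbar (fderiv ℝ f z)) :=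
  dz_eq_of_apply (q := conj (dz (fderiv ℝ f z))) fun u => by
    rw [fderiv_conj_apply, apply_eq_dz_mul_add_dzbar_mul (fderiv ℝ f z) u]
    simp only [map_add, map_mul, conj_conj]
    ring

noncomputable def circleInversion (z : ℂ) : ℂ := (conj z)⁻¹

theorem circleInversion_circleInversion (z : ℂ) : circleInversion (circleInversion z) = z := by
  simp [circleInversion]

theorem norm_circleInversion (z : ℂ) : ‖circleInversion z‖ = ‖z‖⁻¹ := by
  simp [circleInversion]

theorem norm_circleInversion_mem_Ioo {R : ℝ} {z : ℂ} (hR : 0 < R) (hz : ‖z‖ ∈ Set.Ioo R⁻¹ 1) :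
    ‖circleInversion z‖ ∈ Set.Ioo 1 R := by
  have hz0 : 0 < ‖z‖ := lt_trans (inv_pos.2 hR) hz.1
  rw [norm_circleInversion]
  exact ⟨(one_lt_inv₀ hz0).2 hz.2, inv_lt_of_inv_lt₀ hR hz.1⟩

theorem hasFDerivAt_circleInversion {z : ℂ} (hz : z ≠ 0) :
    HasFDerivAt circleInversion (-(conj z ^ 2)⁻¹ • (conjCLE : ℂ →L[ℝ] ℂ)) z := by
  have hz' : conj z ≠ 0 := by simpa using hz
  refine (((hasFDerivAt_inv hz').restrictScalars ℝ).comp z conjCLE.hasFDerivAt).congr_fderiv ?_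
  ext u
  simp [mul_comm]

noncomputable def innerReflection (f : ℂ → ℂ) (z : ℂ) : ℂ :=
  circleInversion (f (circleInversion z))

theorem fderiv_innerReflection_apply {f : ℂ → ℂ} {z : ℂ} (hz : z ≠ 0)
    (hf : DifferentiableAt ℝ f (circleInversion z)) (hfz : f (circleInversion z) ≠ 0) (u : ℂ) :
    fderiv ℝ (innerReflection f) z u =
      (conj (f (circleInversion z)) ^ 2)⁻¹ * (z ^ 2)⁻¹ *
          conj (dz (fderiv ℝ f (circleInversion z))) * u +
        (conj (f (circleInversion z)) ^ 2)⁻¹ * (conj z ^ 2)⁻¹ *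
          conj (dzbar (fderiv ℝ f (circleInversion z))) * conj u := by
  have hg : HasFDerivAt (innerReflection f) _ z :=
    (hasFDerivAt_circleInversion hfz).comp (g := circleInversion) z
      (hf.hasFDerivAt.comp (g := f) z (hasFDerivAt_circleInversion hz))
  rw [hg.fderiv]
  simp [apply_eq_dz_mul_add_dzbar_mul (fderiv ℝ f (circleInversion z))]
  ring

theorem wirtingerZ_mul_wirtingerZ_conj_innerReflection {f : ℂ → ℂ} {z : ℂ} (hz : z ≠ 0)
    (hf : DifferentiableAt ℝ f (circleInversion z)) (hfz : f (circleInversion z) ≠ 0) :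
    wirtingerZ (innerReflection f) z *
        wirtingerZ (fun ζ => conj (innerReflection f ζ)) z =
      conj (wirtingerZ f (circleInversion z) *
          wirtingerZ (fun ζ => conj (f ζ)) (circleInversion z)) /
        (‖f (circleInversion z)‖ ^ 4 * z ^ 4) := by
  have hM := fderiv_innerReflection_apply hz hf hfz
  rw [wirtingerZ_conj, wirtingerZ_conj, wirtingerZ_eq_dz, wirtingerZ_eq_dz,
    dz_eq_of_apply hM, dzbar_eq_of_apply hM]
  set w := circleInversion z
  have hnorm : (‖f w‖ : ℂ) ^ 4 = (f w * conj (f w)) ^ 2 := by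
    rw [mul_conj, normSq_eq_norm_sq]
    push_cast
    ring
  have hfw : conj (f w) ≠ 0 := by simpa using hfz
  simp only [hnorm, map_mul, map_inv₀, map_pow, conj_conj]
  field_simp

theorem stmt_6_general (R : ℝ) (hR : 1 < R)
    (F : ℂ → ℂ) (ρ₁ : ℂ → ℝ)
    (c : ℝ)
    (hF : ∀ w : ℂ, 1 < ‖w‖ → ‖w‖ < R →
      DifferentiableAt ℝ F w ∧ F w ≠ 0 ∧
        ((ρ₁ (F w) : ℂ)) ^ 2 * wirtingerZ F w *
          wirtingerZ (fun ζ => (starRingEnd ℂ) (F ζ)) w = (c : ℂ) / w ^ 2)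
    (Ftil : ℂ → ℂ)
    (hFtil : ∀ z : ℂ, 1 / R < ‖z‖ → ‖z‖ < 1 →
      Ftil z = ((starRingEnd ℂ) (F ((starRingEnd ℂ) z)⁻¹))⁻¹)
    (ρtil : ℂ → ℝ) (hρtil : ∀ u ∈ Set.range Ftil, ρtil u = ρ₁ ((starRingEnd ℂ) u)⁻¹) :
    ∀ z : ℂ, 1 / R < ‖z‖ → ‖z‖ < 1 →
      ((ρtil (Ftil z) : ℂ)) ^ 2 * wirtingerZ Ftil z *
          wirtingerZ (fun ζ => (starRingEnd ℂ) (Ftil ζ)) z =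
        (1 / (‖F ((starRingEnd ℂ) z)⁻¹‖ : ℂ) ^ 4) * ((c : ℂ) / z ^ 2) := by
  intro z hz1 hz2
  rw [show ((starRingEnd ℂ) z)⁻¹ = circleInversion z from rfl]
  have hw := norm_circleInversion_mem_Ioo (R := R) (by linarith) ⟨by simpa using hz1, hz2⟩
  obtain ⟨hdF, hF0, hHopf⟩ := hF _ hw.1 hw.2
  have hz0 : z ≠ 0 := norm_pos_iff.1 (lt_trans (by positivity) hz1)
  have hloc : Ftil =ᶠ[𝓝 z] innerReflection F := by
    have hU : IsOpen {ζ : ℂ | 1 / R < ‖ζ‖ ∧ ‖ζ‖ < 1} :=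
      (isOpen_lt continuous_const continuous_norm).inter (isOpen_lt continuous_norm continuous_const)
    filter_upwards [hU.mem_nhds ⟨hz1, hz2⟩] with ζ hζ using hFtil ζ hζ.1 hζ.2
  have hloc_conj : (fun ζ => conj (Ftil ζ)) =ᶠ[𝓝 z]
      fun ζ => conj (innerReflection F ζ) :=
    hloc.fun_comp conj
  have hρ : ρtil (Ftil z) = ρ₁ (F (circleInversion z)) := by
    rw [hρtil _ ⟨z, rfl⟩, hloc.eq_of_nhds, ← circleInversion, innerReflection,
      circleInversion_circleInversion]
  have hHopf_conj : (ρ₁ (F (circleInversion z)) : ℂ) ^ 2 * conj (wirtingerZ F (circleInversion z) *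
      wirtingerZ (fun ζ => conj (F ζ)) (circleInversion z)) = c * z ^ 2 := by
    have hc : conj ((c : ℂ) / circleInversion z ^ 2) = c * z ^ 2 := by simp [circleInversion]
    rw [← hc, ← hHopf]
    simp [mul_assoc]
  rw [hρ, mul_assoc, wirtingerZ_congr hloc, wirtingerZ_congr hloc_conj,
    wirtingerZ_mul_wirtingerZ_conj_innerReflection hz0 hdF hF0, mul_div_assoc', hHopf_conj]
  field_simp

/-- Hopf-product identity for the inner reflection. If on the annulus
`A(1,R)` the map `F` satisfies `ρ₁(F(w))²·F_w(w)·(F̄)_w(w) = c/w²` with `c ∈ ℝ`,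
`F` real-differentiable and nonvanishing, then the reflected map
`F̃(z) = 1/conj(F(1/z̄))` with the reflected weight `ρ̃(u) = ρ₁(1/ū)` satisfies
`ρ̃(F̃(z))²·F̃_z(z)·(conj F̃)_z(z) = (1/|F(1/z̄)|⁴)·(c/z²)` for `1/R < |z| < 1`. -/
theorem stmt_6 (r R : ℝ) (hr0 : 0 < r) (hr1 : r < 1) (hR : 1 < R)
    (F : ℂ → ℂ) (ρ₁ : ℂ → ℝ) (hρ₁pos : ∀ w ∈ Set.range F, 0 < ρ₁ w)
    (c : ℝ)
    (hF : ∀ w : ℂ, 1 < ‖w‖ → ‖w‖ < R →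
      DifferentiableAt ℝ F w ∧ F w ≠ 0 ∧
        ((ρ₁ (F w) : ℂ)) ^ 2 * wirtingerZ F w *
          wirtingerZ (fun ζ => (starRingEnd ℂ) (F ζ)) w = (c : ℂ) / w ^ 2)
    (Ftil : ℂ → ℂ)
    (hFtil : ∀ z : ℂ, 1 / R < ‖z‖ → ‖z‖ < 1 →
      Ftil z = ((starRingEnd ℂ) (F ((starRingEnd ℂ) z)⁻¹))⁻¹)
    (ρtil : ℂ → ℝ) (hρtil : ∀ u ∈ Set.range Ftil, ρtil u = ρ₁ ((starRingEnd ℂ) u)⁻¹) :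
    ∀ z : ℂ, 1 / R < ‖z‖ → ‖z‖ < 1 →
      ((ρtil (Ftil z) : ℂ)) ^ 2 * wirtingerZ Ftil z *
          wirtingerZ (fun ζ => (starRingEnd ℂ) (Ftil ζ)) z =
        (1 / (‖F ((starRingEnd ℂ) z)⁻¹‖ : ℂ) ^ 4) * ((c : ℂ) / z ^ 2) :=
  stmt_6_general R hR F ρ₁ c hF Ftil hFtil ρtil hρtil
end

section
/- Let 1 < R, 1 < s, let A(1,R) = {w ∈ ℂ : 1 < |w| < R}, and let F : A(1,R) → ℂ and ρ₁ be a positive function on the range of F. Let c ∈ ℝ, and suppose that for every w ∈ A(1,R), F is real-differentiable at w, F(w) ≠ 0, and ρ₁(F(w))²·F_w(w)·(F̄)_w(w) = c/w². For R < |z| < R² define F̃(z) = s²/conj(F(R²/z̄)) and define ρ̃ on the range of F̃ by ρ̃(u) = ρ₁(s²/ū). Then for every z with R < |z| < R², ρ̃(F̃(z))²·F̃_z(z)·(conj F̃)_z(z) = (s⁴/|F(R²/z̄)|⁴)·(c/z²). -/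
open Complex ComplexConjugate

namespace ContinuousLinearMap

noncomputable def linearCoeff (L : ℂ →L[ℝ] ℂ) : ℂ := (L 1 - I * L I) / 2

noncomputable def antilinearCoeff (L : ℂ →L[ℝ] ℂ) : ℂ := (L 1 + I * L I) / 2

noncomputable def hopfProduct (L : ℂ →L[ℝ] ℂ) : ℂ := L.linearCoeff * conj L.antilinearCoeff

variable (L : ℂ →L[ℝ] ℂ)

lemma apply_eq_linearCoeff_add_antilinearCoeff (v : ℂ) :
    L v = L.linearCoeff * v + L.antilinearCoeff * conj v := by
  have hv : L v = v.re * L 1 + v.im * L I := by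
    conv_lhs => rw [← re_add_im v, ← mul_one (v.re : ℂ), ← real_smul, ← real_smul, map_add,
      map_smul, map_smul, real_smul, real_smul]
  rw [hv, linearCoeff, antilinearCoeff]
  conv_rhs => rw [← re_add_im v]
  simp only [map_add, map_mul, conj_ofReal, conj_I]
  linear_combination (v.im * L I) * I_sq

lemma linearCoeff_comp_smul_conj (d : ℂ) :
    (L.comp (d • (conjCLE : ℂ →L[ℝ] ℂ))).linearCoeff = L.antilinearCoeff * conj d := by
  rw [linearCoeff]
  simp only [comp_apply, smul_apply, ContinuousLinearEquiv.coe_coe, conjCLE_apply,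
    smul_eq_mul, map_one, conj_I, mul_one, L.apply_eq_linearCoeff_add_antilinearCoeff (d * -I),
    L.apply_eq_linearCoeff_add_antilinearCoeff d, map_mul, map_neg, conj_I]
  linear_combination ((L.linearCoeff * d - L.antilinearCoeff * conj d) / 2) * I_sq

lemma antilinearCoeff_comp_smul_conj (d : ℂ) :
    (L.comp (d • (conjCLE : ℂ →L[ℝ] ℂ))).antilinearCoeff = L.linearCoeff * d := by
  rw [antilinearCoeff]
  simp only [comp_apply, smul_apply, ContinuousLinearEquiv.coe_coe, conjCLE_apply,
    smul_eq_mul, map_one, conj_I, mul_one, L.apply_eq_linearCoeff_add_antilinearCoeff (d * -I),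
    L.apply_eq_linearCoeff_add_antilinearCoeff d, map_mul, map_neg, conj_I]
  linear_combination (-(L.linearCoeff * d - L.antilinearCoeff * conj d) / 2) * I_sq

lemma hopfProduct_comp_smul_conj (d : ℂ) :
    (L.comp (d • (conjCLE : ℂ →L[ℝ] ℂ))).hopfProduct = conj d ^ 2 * conj L.hopfProduct := by
  simp only [hopfProduct, linearCoeff_comp_smul_conj, antilinearCoeff_comp_smul_conj, map_mul,
    conj_conj]
  ring

lemma hopfProduct_smul_conj_comp (e : ℂ) :
    ((e • (conjCLE : ℂ →L[ℝ] ℂ)).comp L).hopfProduct = (‖e‖ : ℂ) ^ 2 * L.hopfProduct := by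
  simp only [hopfProduct, linearCoeff, antilinearCoeff, comp_apply, smul_apply,
    ContinuousLinearEquiv.coe_coe, conjCLE_apply, smul_eq_mul, ← mul_conj', map_div₀, map_add,
    map_mul, conj_I, conj_conj, map_ofNat]
  ring

end ContinuousLinearMap

open ContinuousLinearMap

lemma wirtingerZ_mul_wirtingerZ_conj (f : ℂ → ℂ) (z : ℂ) :
    wirtingerZ f z * wirtingerZ (fun ζ => conj (f ζ)) z = (fderiv ℝ f z).hopfProduct := by
  have hconj : fderiv ℝ (fun ζ => conj (f ζ)) z = (conjCLE : ℂ →L[ℝ] ℂ).comp (fderiv ℝ f z) :=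
    conjCLE.comp_fderiv (f := f)
  simp only [wirtingerZ, hopfProduct, linearCoeff, antilinearCoeff, hconj, comp_apply,
    ContinuousLinearEquiv.coe_coe, conjCLE_apply, map_div₀, map_add, map_mul, conj_I, map_ofNat]
  ring

lemma hasFDerivAt_const_div_conj (a : ℂ) {ζ : ℂ} (hζ : ζ ≠ 0) :
    HasFDerivAt (fun ζ => a / conj ζ) ((-a / conj ζ ^ 2) • (conjCLE : ℂ →L[ℝ] ℂ)) ζ := by
  have h := (((hasDerivAt_inv ((map_ne_zero conj).2 hζ)).const_mul a).hasFDerivAt.restrictScalars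
    ℝ).comp ζ (conjCLE : ℂ →L[ℝ] ℂ).hasFDerivAt
  simp only [div_eq_mul_inv]
  refine h.congr_fderiv ?_
  ext1 v
  simp only [comp_apply, ContinuousLinearEquiv.coe_coe, conjCLE_apply, coe_restrictScalars',
    toSpanSingleton_apply, smul_apply, smul_eq_mul]
  ring

lemma hopfProduct_fderiv_reflection (f : ℂ → ℂ) (a b : ℂ) {z : ℂ} (hz : z ≠ 0)
    (hf : DifferentiableAt ℝ f (a / conj z)) (hfz : f (a / conj z) ≠ 0) :
    (fderiv ℝ (fun ζ => b / conj (f (a / conj ζ))) z).hopfProduct =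
      (‖b‖ : ℂ) ^ 2 / (‖f (a / conj z)‖ : ℂ) ^ 4 * (conj a / z ^ 2) ^ 2 *
        conj (fderiv ℝ f (a / conj z)).hopfProduct := by
  have hd := hasFDerivAt_const_div_conj a hz
  have he := hasFDerivAt_const_div_conj b hfz
  rw [show (fun ζ => b / conj (f (a / conj ζ))) = (b / conj ·) ∘ f ∘ (a / conj ·) from rfl,
    (he.comp z (hf.hasFDerivAt.comp z hd)).fderiv, hopfProduct_smul_conj_comp,
    hopfProduct_comp_smul_conj]
  simp only [norm_div, norm_neg, norm_pow, Complex.norm_conj, map_div₀, map_neg, map_pow,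
    conj_conj]
  push_cast
  ring

lemma ofReal_sq_div_conj_involutive {s : ℝ} (hs : s ≠ 0) (u : ℂ) :
    (s : ℂ) ^ 2 / conj ((s : ℂ) ^ 2 / conj u) = u := by
  have hs' : (s : ℂ) ≠ 0 := ofReal_ne_zero.2 hs
  rw [map_div₀, conj_conj, map_pow, conj_ofReal]
  field_simp

lemma norm_sq_div_conj_mem_annulus {R : ℝ} (hR : 0 < R) {z : ℂ} (hz₁ : R < ‖z‖)
    (hz₂ : ‖z‖ < R ^ 2) : 1 < ‖(R : ℂ) ^ 2 / conj z‖ ∧ ‖(R : ℂ) ^ 2 / conj z‖ < R := by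
  have hnorm : ‖(R : ℂ) ^ 2 / conj z‖ = R ^ 2 / ‖z‖ := by simp [abs_of_pos hR]
  rw [hnorm, lt_div_iff₀ (hR.trans hz₁), div_lt_iff₀ (hR.trans hz₁)]
  constructor <;> nlinarith

theorem stmt_7_general (R s : ℝ) (hR : 1 < R) (hs : 1 < s)
    (F : ℂ → ℂ) (ρ₁ : ℂ → ℝ)
    (c : ℝ)
    (hF : ∀ w : ℂ, 1 < ‖w‖ → ‖w‖ < R →
      DifferentiableAt ℝ F w ∧ F w ≠ 0 ∧
        ((ρ₁ (F w) : ℂ)) ^ 2 * wirtingerZ F w *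
          wirtingerZ (fun ζ => (starRingEnd ℂ) (F ζ)) w = (c : ℂ) / w ^ 2)
    (Ftil : ℂ → ℂ)
    (hFtil : ∀ z : ℂ, R < ‖z‖ → ‖z‖ < R ^ 2 →
      Ftil z = (s : ℂ) ^ 2 / (starRingEnd ℂ) (F ((R : ℂ) ^ 2 / (starRingEnd ℂ) z)))
    (ρtil : ℂ → ℝ)
    (hρtil : ∀ u ∈ Set.range Ftil, ρtil u = ρ₁ ((s : ℂ) ^ 2 / (starRingEnd ℂ) u)) :
    ∀ z : ℂ, R < ‖z‖ → ‖z‖ < R ^ 2 →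
      ((ρtil (Ftil z) : ℂ)) ^ 2 * wirtingerZ Ftil z *
          wirtingerZ (fun ζ => (starRingEnd ℂ) (Ftil ζ)) z =
        ((s : ℂ) ^ 4 / (‖F ((R : ℂ) ^ 2 / (starRingEnd ℂ) z)‖ : ℂ) ^ 4) *
          ((c : ℂ) / z ^ 2) := by
  intro z hz₁ hz₂
  have hR₀ : 0 < R := one_pos.trans hR
  have hz : z ≠ 0 := norm_pos_iff.1 (hR₀.trans hz₁)
  set w := (R : ℂ) ^ 2 / conj z with hw
  obtain ⟨hw₁, hw₂⟩ := norm_sq_div_conj_mem_annulus hR₀ hz₁ hz₂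
  obtain ⟨hFw_diff, hFw, hHopf⟩ := hF w hw₁ hw₂
  have hFtil_eq : Ftil =ᶠ[nhds z] fun ζ => (s : ℂ) ^ 2 / conj (F ((R : ℂ) ^ 2 / conj ζ)) :=
    ((isOpen_lt continuous_const continuous_norm).inter
      (isOpen_lt continuous_norm continuous_const)).eventually_mem ⟨hz₁, hz₂⟩ |>.mono
      fun ζ hζ => hFtil ζ hζ.1 hζ.2
  have hρ : ρtil (Ftil z) = ρ₁ (F w) := by
    rw [hρtil _ ⟨z, rfl⟩, hFtil z hz₁ hz₂, ofReal_sq_div_conj_involutive (one_pos.trans hs).ne']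
  rw [mul_assoc, wirtingerZ_mul_wirtingerZ_conj] at hHopf
  have hHopf_conj :
      (ρ₁ (F w) : ℂ) ^ 2 * conj (fderiv ℝ F w).hopfProduct = c / ((R : ℂ) ^ 2 / z) ^ 2 := by
    simpa [w] using congrArg conj hHopf
  rw [mul_assoc, wirtingerZ_mul_wirtingerZ_conj, hFtil_eq.fderiv_eq,
    hopfProduct_fderiv_reflection F _ _ hz hFw_diff hFw, hρ]
  calc _ = (‖(s : ℂ) ^ 2‖ : ℂ) ^ 2 / (‖F w‖ : ℂ) ^ 4 * ((R : ℂ) ^ 2 / z ^ 2) ^ 2 *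
        ((ρ₁ (F w) : ℂ) ^ 2 * conj (fderiv ℝ F w).hopfProduct) := by
        rw [← hw, map_pow, conj_ofReal]; ring
    _ = _ := by
      have hR₀' : (R : ℂ) ≠ 0 := ofReal_ne_zero.2 hR₀.ne'
      rw [hHopf_conj, norm_pow, norm_real, Real.norm_eq_abs, sq_abs]
      field_simp
      push_cast
      ring

/-- Hopf-product identity for the outer reflection. If on the annulus
`A(1,R)` the map `F` satisfies `ρ₁(F(w))²·F_w(w)·(F̄)_w(w) = c/w²` with `c ∈ ℝ`,
`F` real-differentiable and nonvanishing, then the reflected map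
`F̃(z) = s²/conj(F(R²/z̄))` with the reflected weight `ρ̃(u) = ρ₁(s²/ū)` satisfies
`ρ̃(F̃(z))²·F̃_z(z)·(conj F̃)_z(z) = (s⁴/|F(R²/z̄)|⁴)·(c/z²)` for `R < |z| < R²`. -/
theorem stmt_7 (R s : ℝ) (hR : 1 < R) (hs : 1 < s)
    (F : ℂ → ℂ) (ρ₁ : ℂ → ℝ) (hρ₁pos : ∀ w ∈ Set.range F, 0 < ρ₁ w)
    (c : ℝ)
    (hF : ∀ w : ℂ, 1 < ‖w‖ → ‖w‖ < R →
      DifferentiableAt ℝ F w ∧ F w ≠ 0 ∧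
        ((ρ₁ (F w) : ℂ)) ^ 2 * wirtingerZ F w *
          wirtingerZ (fun ζ => (starRingEnd ℂ) (F ζ)) w = (c : ℂ) / w ^ 2)
    (Ftil : ℂ → ℂ)
    (hFtil : ∀ z : ℂ, R < ‖z‖ → ‖z‖ < R ^ 2 →
      Ftil z = (s : ℂ) ^ 2 / (starRingEnd ℂ) (F ((R : ℂ) ^ 2 / (starRingEnd ℂ) z)))
    (ρtil : ℂ → ℝ)
    (hρtil : ∀ u ∈ Set.range Ftil, ρtil u = ρ₁ ((s : ℂ) ^ 2 / (starRingEnd ℂ) u)) :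
    ∀ z : ℂ, R < ‖z‖ → ‖z‖ < R ^ 2 →
      ((ρtil (Ftil z) : ℂ)) ^ 2 * wirtingerZ Ftil z *
          wirtingerZ (fun ζ => (starRingEnd ℂ) (Ftil ζ)) z =
        ((s : ℂ) ^ 4 / (‖F ((R : ℂ) ^ 2 / (starRingEnd ℂ) z)‖ : ℂ) ^ 4) *
          ((c : ℂ) / z ^ 2) :=
  stmt_7_general R s hR hs F ρ₁ c hF Ftil hFtil ρtil hρtil
end
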